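/- Second-moment bound for the SVRG-type stochastic direction (Lemma, Appendix B). Suppose each ∇f_i is L-Lipschitz (Assumption A1). Fix vectors x, x0, e ∈ ℝ^d and an integer 1 ≤ b ≤ n, and let Ĩ be a uniformly random subset of {1,…,n} of size b. Define ν = ∇f_Ĩ(x) − ∇f_Ĩ(x0) + ∇f(x0) + e. Then E‖ν‖² ≤ (L²/b)·‖x − x0‖² + 2‖∇f(x)‖² + 2‖e‖². -/

import Mathlib

open scoped BigOperators ENNReal

noncomputable section

namespace SCSG

/-- The ambient Euclidean space. -/
abbrev Vec (d : ℕ) := EuclideanSpace ℝ (Fin d)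

/-- The finite-sum objective `f(x) = (1/n) ∑ f_i(x)`. -/
def avg (n d : ℕ) (f : Fin n → Vec d → ℝ) : Vec d → ℝ :=
  fun x => (∑ i, f i x) / n

/-- Batch gradient `∇f_I(x) = |I|⁻¹ ∑_{i∈I} ∇f_i(x)`. -/
def gradBatch {n d : ℕ} (f : Fin n → Vec d → ℝ) (I : Finset (Fin n)) (x : Vec d) : Vec d :=
  (I.card : ℝ)⁻¹ • ∑ i ∈ I, gradient (f i) x

/-- Uniform distribution over size-`m` subsets of `{1,…,n}`. -/
def unifSubsets (n m : ℕ) : PMF (Finset (Fin n)) :=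
  if h : (Finset.powersetCard m (Finset.univ : Finset (Fin n))).Nonempty then
    PMF.uniformOfFinset _ h
  else PMF.pure ∅

/-- Geometric distribution on `{0,1,2,…}` with `P(N = k) = γ^k (1-γ)`. -/
def geom (γ : ℝ) : PMF ℕ :=
  if h : 0 < 1 - γ ∧ 1 - γ ≤ 1 then ProbabilityTheory.geometricPMF h.1 h.2
  else PMF.pure 0

/-- Expectation of a real function under a `PMF`. -/
def pexp {α : Type*} (p : PMF α) (g : α → ℝ) : ℝ := ∑' a, (p a).toReal * g a

variable {n d : ℕ}

/-- One inner SVRG-type update of SCSG. -/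
def innerStep (f : Fin n → Vec d → ℝ) (x0 g : Vec d) (η : ℝ) (b : ℕ) (x : Vec d) :
    PMF (Vec d) :=
  (unifSubsets n b).map fun J => x - η • (gradBatch f J x - gradBatch f J x0 + g)

/-- `k` inner SVRG-type updates of SCSG started at `x`. -/
def innerIter (f : Fin n → Vec d → ℝ) (x0 g : Vec d) (η : ℝ) (b : ℕ) :
    ℕ → Vec d → PMF (Vec d)
  | 0, x => PMF.pure x
  | k + 1, x => (innerStep f x0 g η b x).bind (innerIter f x0 g η b k)

/-- One epoch of SCSG started at `xp`, returning the batch `I_j` together with `x̃_j`. -/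
def epochFull (f : Fin n → Vec d → ℝ) (η : ℝ) (B b : ℕ) (xp : Vec d) :
    PMF (Finset (Fin n) × Vec d) :=
  (unifSubsets n B).bind fun I =>
    ((geom ((B : ℝ) / (B + b))).bind fun N =>
      innerIter f xp (gradBatch f I xp) η b N xp).map fun y => (I, y)

/-- One epoch of SCSG, returning `x̃_j`. -/
def epoch (f : Fin n → Vec d → ℝ) (η : ℝ) (B b : ℕ) (xp : Vec d) : PMF (Vec d) :=
  (epochFull f η B b xp).map Prod.snd

/-- Law of `x̃_j` (the iterate after `j` epochs), for stepsizes `η`, batch sizes `B`,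
mini-batch sizes `b` (epoch `j` uses `η j`, `B j`, `b j`). -/
def marg (f : Fin n → Vec d → ℝ) (η : ℕ → ℝ) (B b : ℕ → ℕ) (x0 : Vec d) :
    ℕ → PMF (Vec d)
  | 0 => PMF.pure x0
  | j + 1 => (marg f η B b x0 j).bind (epoch f (η (j + 1)) (B (j + 1)) (b (j + 1)))

/-- Joint law of `(x̃_j, x̃_{j+1})`. -/
def pairPMF (f : Fin n → Vec d → ℝ) (η : ℕ → ℝ) (B b : ℕ → ℕ) (x0 : Vec d) (j : ℕ) :
    PMF (Vec d × Vec d) :=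
  (marg f η B b x0 j).bind fun x =>
    (epoch f (η (j + 1)) (B (j + 1)) (b (j + 1)) x).map fun y => (x, y)

/-- Joint law of `(x̃_j, I_{j+1}, x̃_{j+1})`. -/
def triplePMF (f : Fin n → Vec d → ℝ) (η : ℕ → ℝ) (B b : ℕ → ℕ) (x0 : Vec d) (j : ℕ) :
    PMF (Vec d × Finset (Fin n) × Vec d) :=
  (marg f η B b x0 j).bind fun x =>
    (epochFull f (η (j + 1)) (B (j + 1)) (b (j + 1)) x).map fun Iy => (x, Iy)

/-!
`ν` is the mean over `Ĩ` of `u i = ∇f_i(x) − ∇f_i(x0) + ∇f(x0) + e`, whose mean over all `i` is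
`ū = ∇f(x) + e`. For a uniformly random `b`-subset, `E‖ν‖² = ‖ū‖² + E‖(1/b) ∑_{i∈Ĩ} (u i − ū)‖²`,
and counting the `b`-subsets containing a given index or pair of indices bounds the last term by
the with-replacement value `(1/(bn)) ∑ ‖u i − ū‖²`. Since `u i − ū` is the centred
`∇f_i(x) − ∇f_i(x0)`, this sum is at most `n L² ‖x − x0‖²`, and `‖ū‖² ≤ 2‖∇f(x)‖² + 2‖e‖²`.
-/

theorem _root_.Nat.mul_choose_sub_one_sub_one {n k : ℕ} (hk : 1 ≤ k) :
    n * (n - 1).choose (k - 1) = k * n.choose k := by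
  obtain ⟨k, rfl⟩ := Nat.exists_eq_add_of_le' hk
  rcases n with _ | n
  · simp
  · simpa [mul_comm] using Nat.add_one_mul_choose_eq n k

theorem norm_add_sq_le {E : Type*} [SeminormedAddCommGroup E] (a b : E) :
    ‖a + b‖ ^ 2 ≤ 2 * ‖a‖ ^ 2 + 2 * ‖b‖ ^ 2 :=
  (pow_le_pow_left₀ (norm_nonneg _) (norm_add_le a b) 2).trans (add_sq_le.trans_eq (mul_add _ _ _))

open Finset

section

variable {ι : Type*} [Fintype ι] {V : Type*} [NormedAddCommGroup V] [InnerProductSpace ℝ V]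

theorem sum_norm_sub_inv_card_smul_sum_sq_le (v : ι → V) :
    ∑ i, ‖v i - (Fintype.card ι : ℝ)⁻¹ • ∑ j, v j‖ ^ 2 ≤ ∑ i, ‖v i‖ ^ 2 := by
  rcases isEmpty_or_nonempty ι with hι | hι
  · simp
  set m := (Fintype.card ι : ℝ)⁻¹ • ∑ j, v j
  have hn : (Fintype.card ι : ℝ) ≠ 0 := Nat.cast_ne_zero.2 Fintype.card_ne_zero
  have hsum : ∑ j, v j = (Fintype.card ι : ℝ) • m := (smul_inv_smul₀ hn _).symm
  have hexpand : ∑ i, ‖v i - m‖ ^ 2 = ∑ i, ‖v i‖ ^ 2 - Fintype.card ι * ‖m‖ ^ 2 := by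
    simp_rw [norm_sub_sq_real, sum_add_distrib, sum_sub_distrib, ← mul_sum, ← sum_inner, hsum,
      real_inner_smul_left, real_inner_self_eq_norm_sq, sum_const, card_univ, nsmul_eq_mul]
    ring
  rw [hexpand]
  exact sub_le_self _ (by positivity)

theorem sum_norm_sub_inv_card_smul_sum_sq_le_of_norm_le (v : ι → V) {r : ℝ}
    (hv : ∀ i, ‖v i‖ ≤ r) :
    ∑ i, ‖v i - (Fintype.card ι : ℝ)⁻¹ • ∑ j, v j‖ ^ 2 ≤ Fintype.card ι * r ^ 2 :=
  (sum_norm_sub_inv_card_smul_sum_sq_le v).trans <| by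
    simpa using sum_le_card_nsmul univ _ _ fun i _ => pow_le_pow_left₀ (norm_nonneg _) (hv i) 2

variable [DecidableEq ι]

theorem card_filter_superset_powersetCard (s : Finset ι) {k : ℕ} (hs : #s ≤ k) :
    #{J ∈ powersetCard k (univ : Finset ι) | s ⊆ J} =
      (Fintype.card ι - #s).choose (k - #s) := by
  rw [← card_compl, ← card_powersetCard]
  refine card_bij' (fun J _ => J \ s) (fun K _ => K ∪ s) ?_ ?_ ?_ ?_
  · intro J hJ
    rw [mem_filter, mem_powersetCard_univ] at hJ
    rw [mem_powersetCard, card_sdiff_of_subset hJ.2, hJ.1]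
    exact ⟨fun i hi => mem_compl.2 (mem_sdiff.1 hi).2, rfl⟩
  · intro K hK
    rw [mem_powersetCard, subset_compl_iff_disjoint_right] at hK
    rw [mem_filter, mem_powersetCard_univ, card_union_of_disjoint hK.1, hK.2]
    exact ⟨by omega, subset_union_right⟩
  · intro J hJ
    exact sdiff_union_of_subset (mem_filter.1 hJ).2
  · intro K hK
    rw [mem_powersetCard, subset_compl_iff_disjoint_right] at hK
    exact union_sdiff_cancel_right hK.1

theorem card_filter_mem_powersetCard (i : ι) {k : ℕ} (hk : 1 ≤ k) :
    #{J ∈ powersetCard k (univ : Finset ι) | i ∈ J} = (Fintype.card ι - 1).choose (k - 1) := by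
  simpa using card_filter_superset_powersetCard {i} (by simpa using hk)

theorem exists_card_filter_pair_mem_powersetCard (k : ℕ) :
    ∃ c : ℕ, ∀ i j : ι, i ≠ j →
      #{J ∈ powersetCard k (univ : Finset ι) | i ∈ J ∧ j ∈ J} = c := by
  rcases lt_or_ge k 2 with hk | hk
  · refine ⟨0, fun i j hij => card_eq_zero.2 (filter_false_of_mem fun J hJ ⟨hi, hj⟩ => ?_)⟩
    have := card_le_card (insert_subset hi (singleton_subset_iff.2 hj))
    rw [card_pair hij, (mem_powersetCard.1 hJ).2] at this
    omega
  · refine ⟨(Fintype.card ι - 2).choose (k - 2), fun i j hij => ?_⟩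
    have := card_filter_superset_powersetCard {i, j} (k := k) (by rwa [card_pair hij])
    simpa [card_pair hij, insert_subset_iff] using this

theorem sum_sum_mem_eq_sum_card_filter_smul {M : Type*} [AddCommMonoid M]
    (𝒜 : Finset (Finset ι)) (f : ι → M) :
    ∑ J ∈ 𝒜, ∑ i ∈ J, f i = ∑ i, #{J ∈ 𝒜 | i ∈ J} • f i := by
  rw [sum_comm' (t' := univ) (s' := fun i => {J ∈ 𝒜 | i ∈ J}) (by simp)]
  simp_rw [sum_const]

theorem sum_powersetCard_sum_eq_zero {M : Type*} [AddCommMonoid M] {w : ι → M}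
    (hw : ∑ i, w i = 0) (k : ℕ) : ∑ J ∈ powersetCard k (univ : Finset ι), ∑ i ∈ J, w i = 0 := by
  rcases Nat.eq_zero_or_pos k with rfl | hk
  · simp
  simp_rw [sum_sum_mem_eq_sum_card_filter_smul, card_filter_mem_powersetCard _ hk, ← smul_sum,
    hw, smul_zero]

theorem norm_sum_sq_eq_sum_sum_inner (J : Finset ι) (w : ι → V) :
    ‖∑ i ∈ J, w i‖ ^ 2 = ∑ i, ∑ j, if i ∈ J ∧ j ∈ J then inner ℝ (w i) (w j) else 0 := by
  simp_rw [← real_inner_self_eq_norm_sq, sum_inner, inner_sum]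
  simp [ite_and]

theorem sum_norm_sum_sq_eq_sum_card_mul_inner (𝒜 : Finset (Finset ι)) (w : ι → V) :
    ∑ J ∈ 𝒜, ‖∑ i ∈ J, w i‖ ^ 2 =
      ∑ i, ∑ j, (#{J ∈ 𝒜 | i ∈ J ∧ j ∈ J} : ℝ) * inner ℝ (w i) (w j) := by
  simp_rw [natCast_card_filter, sum_mul, ite_mul, one_mul, zero_mul, norm_sum_sq_eq_sum_sum_inner]
  rw [sum_comm]
  exact sum_congr rfl fun i _ => sum_comm

theorem sum_powersetCard_norm_sum_sq_le {w : ι → V} (hw : ∑ i, w i = 0) (k : ℕ) :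
    (Fintype.card ι : ℝ) * ∑ J ∈ powersetCard k (univ : Finset ι), ‖∑ i ∈ J, w i‖ ^ 2
      ≤ k * (Fintype.card ι).choose k * ∑ i, ‖w i‖ ^ 2 := by
  rcases Nat.eq_zero_or_pos k with rfl | hk
  · simp
  -- Off the diagonal every pair is covered equally often, so those terms add up to a multiple
  -- of `‖∑ i, w i‖ ^ 2 = 0`.
  obtain ⟨c, hc⟩ := exists_card_filter_pair_mem_powersetCard (ι := ι) k
  set c₁ := (Fintype.card ι - 1).choose (k - 1)
  have hcoef : ∀ i j, (#{J ∈ powersetCard k (univ : Finset ι) | i ∈ J ∧ j ∈ J} : ℝ) =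
      c + if i = j then (c₁ - c : ℝ) else 0 := by
    intro i j
    split_ifs with hij
    · simp [hij, card_filter_mem_powersetCard j hk, c₁]
    · simp [hc i j hij]
  have hrow : ∀ i, ∑ j, (#{J ∈ powersetCard k (univ : Finset ι) | i ∈ J ∧ j ∈ J} : ℝ) *
      inner ℝ (w i) (w j) = (c₁ - c) * ‖w i‖ ^ 2 := by
    intro i
    simp_rw [hcoef, add_mul, sum_add_distrib, ← mul_sum, ← inner_sum, hw, inner_zero_right,
      mul_zero, zero_add, ite_mul, zero_mul, sum_ite_eq, mem_univ, if_true,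
      real_inner_self_eq_norm_sq]
  have hchoose : (Fintype.card ι : ℝ) * c₁ = k * (Fintype.card ι).choose k := by
    exact_mod_cast Nat.mul_choose_sub_one_sub_one hk
  rw [sum_norm_sum_sq_eq_sum_card_mul_inner, sum_congr rfl fun i _ => hrow i, ← mul_sum,
    ← hchoose, mul_assoc]
  gcongr
  exact sub_le_self _ (Nat.cast_nonneg c)

theorem sum_powersetCard_norm_inv_smul_sum_add_sq_le [Nonempty ι] (v : ι → V) (c : V) {k : ℕ}
    (hk : k ≠ 0) :
    ∑ J ∈ powersetCard k (univ : Finset ι), ‖(k : ℝ)⁻¹ • ∑ i ∈ J, v i + c‖ ^ 2 ≤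
      (Fintype.card ι).choose k * (‖(Fintype.card ι : ℝ)⁻¹ • ∑ i, v i + c‖ ^ 2 +
        ((k : ℝ) * Fintype.card ι)⁻¹ * ∑ i, ‖v i - (Fintype.card ι : ℝ)⁻¹ • ∑ j, v j‖ ^ 2) := by
  set m := (Fintype.card ι : ℝ)⁻¹ • ∑ i, v i
  set w := fun i => v i - m
  have hn : (Fintype.card ι : ℝ) ≠ 0 := Nat.cast_ne_zero.2 Fintype.card_ne_zero
  have hk' : (k : ℝ) ≠ 0 := Nat.cast_ne_zero.2 hk
  have hw : ∑ i, w i = 0 := by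
    simp only [w, sum_sub_distrib, sum_const, card_univ, ← Nat.cast_smul_eq_nsmul ℝ, m,
      smul_inv_smul₀ hn, sub_self]
  have hsplit : ∀ J ∈ powersetCard k (univ : Finset ι),
      (k : ℝ)⁻¹ • ∑ i ∈ J, v i + c = (m + c) + (k : ℝ)⁻¹ • ∑ i ∈ J, w i := by
    intro J hJ
    simp only [w, sum_sub_distrib, sum_const, (mem_powersetCard.1 hJ).2, smul_sub,
      ← Nat.cast_smul_eq_nsmul ℝ, inv_smul_smul₀ hk']
    abel
  have hsq := sum_powersetCard_norm_sum_sq_le hw k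
  calc ∑ J ∈ powersetCard k univ, ‖(k : ℝ)⁻¹ • ∑ i ∈ J, v i + c‖ ^ 2
      = ∑ J ∈ powersetCard k univ, (‖m + c‖ ^ 2 +
          2 * inner ℝ (m + c) ((k : ℝ)⁻¹ • ∑ i ∈ J, w i) +
          (k : ℝ)⁻¹ ^ 2 * ‖∑ i ∈ J, w i‖ ^ 2) := by
        refine sum_congr rfl fun J hJ => ?_
        rw [hsplit J hJ, norm_add_sq_real, norm_smul (k : ℝ)⁻¹, mul_pow, Real.norm_eq_abs, sq_abs]
    _ = (Fintype.card ι).choose k * ‖m + c‖ ^ 2 +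
          (k : ℝ)⁻¹ ^ 2 * ∑ J ∈ powersetCard k univ, ‖∑ i ∈ J, w i‖ ^ 2 := by
        rw [sum_add_distrib, sum_add_distrib, ← mul_sum, ← inner_sum, ← smul_sum,
          sum_powersetCard_sum_eq_zero hw, smul_zero, inner_zero_right, mul_zero,
          add_zero, sum_const, card_powersetCard, card_univ, nsmul_eq_mul, mul_sum]
    _ ≤ _ := by
        rw [mul_add]
        gcongr _ + ?_
        calc (k : ℝ)⁻¹ ^ 2 * ∑ J ∈ powersetCard k univ, ‖∑ i ∈ J, w i‖ ^ 2
            = ((k : ℝ) ^ 2 * Fintype.card ι)⁻¹ *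
                (Fintype.card ι * ∑ J ∈ powersetCard k univ, ‖∑ i ∈ J, w i‖ ^ 2) := by
              field_simp
          _ ≤ ((k : ℝ) ^ 2 * Fintype.card ι)⁻¹ *
                (k * (Fintype.card ι).choose k * ∑ i, ‖w i‖ ^ 2) := by gcongr
          _ = (Fintype.card ι).choose k * (((k : ℝ) * Fintype.card ι)⁻¹ * ∑ i, ‖w i‖ ^ 2) := by
              field_simp

end

theorem pexp_unifSubsets {k : ℕ} (hkn : k ≤ n) (g : Finset (Fin n) → ℝ) :
    pexp (unifSubsets n k) g = (n.choose k : ℝ)⁻¹ * ∑ J ∈ powersetCard k univ, g J := by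
  have hne : (powersetCard k (univ : Finset (Fin n))).Nonempty := by
    simpa [powersetCard_nonempty] using hkn
  rw [pexp, unifSubsets, dif_pos hne, tsum_eq_sum (s := powersetCard k univ) fun J hJ => by
    rw [PMF.uniformOfFinset_apply, if_neg hJ, ENNReal.toReal_zero, zero_mul], mul_sum]
  refine sum_congr rfl fun J hJ => ?_
  simp [PMF.uniformOfFinset_apply, hJ]

theorem gradBatch_sub_gradBatch (f : Fin n → Vec d → ℝ) (J : Finset (Fin n)) (x y : Vec d) :
    gradBatch f J x - gradBatch f J y =
      (#J : ℝ)⁻¹ • ∑ i ∈ J, (gradient (f i) x - gradient (f i) y) := by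
  rw [gradBatch, gradBatch, ← smul_sub, ← sum_sub_distrib]

theorem gradient_avg (f : Fin n → Vec d → ℝ) (hdiff : ∀ i, Differentiable ℝ (f i)) (y : Vec d) :
    gradient (avg n d f) y = (n : ℝ)⁻¹ • ∑ i, gradient (f i) y := by
  have havg : avg n d f = fun x => (n : ℝ)⁻¹ * ∑ i, f i x := by
    funext z
    simp [avg, div_eq_inv_mul]
  have hsum : DifferentiableAt ℝ (fun x => ∑ i, f i x) y :=
    DifferentiableAt.fun_sum fun i _ => (hdiff i).differentiableAt
  rw [havg, gradient, fderiv_const_mul hsum,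
    fderiv_fun_sum fun i _ => (hdiff i).differentiableAt, map_smul, map_sum]
  rfl

theorem nu_second_moment_general
    (d n : ℕ) (f : Fin n → Vec d → ℝ) (L : ℝ)
    (hdiff : ∀ i, Differentiable ℝ (f i))
    (hlip : ∀ i (x y : Vec d), ‖gradient (f i) x - gradient (f i) y‖ ≤ L * ‖x - y‖)
    (b : ℕ) (hb : 1 ≤ b) (hbn : b ≤ n) (x x0 e : Vec d) :
    pexp (unifSubsets n b)
        (fun J => ‖gradBatch f J x - gradBatch f J x0 + gradient (avg n d f) x0 + e‖ ^ 2)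
      ≤ L ^ 2 / b * ‖x - x0‖ ^ 2 + 2 * ‖gradient (avg n d f) x‖ ^ 2 + 2 * ‖e‖ ^ 2 := by
  have : Nonempty (Fin n) := ⟨⟨0, by omega⟩⟩
  have hn : (n : ℝ) ≠ 0 := Nat.cast_ne_zero.2 (by omega)
  have hC : (n.choose b : ℝ) ≠ 0 := Nat.cast_ne_zero.2 (Nat.choose_pos hbn).ne'
  set g : Fin n → Vec d := fun i => gradient (f i) x - gradient (f i) x0
  set gMean := (n : ℝ)⁻¹ • ∑ i, g i
  have hsample := sum_powersetCard_norm_inv_smul_sum_add_sq_le g (gradient (avg n d f) x0 + e)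
    (k := b) (by omega)
  have hdev := sum_norm_sub_inv_card_smul_sum_sq_le_of_norm_le g fun i => hlip i x x0
  simp only [Fintype.card_fin] at hsample hdev
  have hmean : gMean + (gradient (avg n d f) x0 + e) = gradient (avg n d f) x + e := by
    simp only [gMean, g, sum_sub_distrib, smul_sub, ← gradient_avg f hdiff]
    abel
  rw [pexp_unifSubsets hbn, sum_congr rfl fun J hJ => by
    rw [gradBatch_sub_gradBatch, (mem_powersetCard.1 hJ).2, add_assoc]]
  calc _ ≤ (n.choose b : ℝ)⁻¹ * ((n.choose b : ℝ) * (‖gMean + (gradient (avg n d f) x0 + e)‖ ^ 2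
          + ((b : ℝ) * n)⁻¹ * ∑ i, ‖g i - gMean‖ ^ 2)) := by
        gcongr
    _ ≤ 2 * ‖gradient (avg n d f) x‖ ^ 2 + 2 * ‖e‖ ^ 2 +
          ((b : ℝ) * n)⁻¹ * (n * (L * ‖x - x0‖) ^ 2) := by
        rw [inv_mul_cancel_left₀ hC, hmean]
        gcongr
        exact norm_add_sq_le _ _
    _ = _ := by
        field_simp
        ring

/-- **Second-moment bound for the SVRG-type stochastic direction (Appendix B).**
Suppose each `∇f_i` is `L`-Lipschitz. For fixed `x, x0, e` and a uniformly random size-`b`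
subset `Ĩ` of `{1,…,n}`, the direction `ν = ∇f_Ĩ(x) − ∇f_Ĩ(x0) + ∇f(x0) + e` satisfies
`E‖ν‖² ≤ (L²/b)·‖x − x0‖² + 2‖∇f(x)‖² + 2‖e‖²`. -/
theorem nu_second_moment
    (d n : ℕ) (hn : 0 < n) (f : Fin n → Vec d → ℝ) (L : ℝ)
    (hdiff : ∀ i, Differentiable ℝ (f i))
    (hlip : ∀ i (x y : Vec d), ‖gradient (f i) x - gradient (f i) y‖ ≤ L * ‖x - y‖)
    (b : ℕ) (hb : 1 ≤ b) (hbn : b ≤ n) (x x0 e : Vec d) :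
    pexp (unifSubsets n b)
        (fun J => ‖gradBatch f J x - gradBatch f J x0 + gradient (avg n d f) x0 + e‖ ^ 2)
      ≤ L ^ 2 / b * ‖x - x0‖ ^ 2 + 2 * ‖gradient (avg n d f) x‖ ^ 2 + 2 * ‖e‖ ^ 2 :=
  nu_second_moment_general d n f L hdiff hlip b hb hbn x x0 e

end SCSG
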